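/- arXiv:2307.06140 — 10 statements merged into one kernel-verified Lean document; each statement's English description precedes it below -/
import Mathlib

section
/- Let $B$ be a left brace and define $\check r : B\times B \to B\times B$ by $\check r(x,y) = (x\circ y - x,\ (x\circ y - x)^{-1}\circ x\circ y)$. Then $\check r$ satisfies the set-theoretic braid equation $(\check r\times \mathrm{id})(\mathrm{id}\times \check r)(\check r\times \mathrm{id}) = (\mathrm{id}\times \check r)(\check r\times \mathrm{id})(\mathrm{id}\times \check r)$ on $B\times B\times B$. -/
structure LeftBrace (B : Type*) where
  add : B → B → B
  zero : B
  neg : B → B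
  mul : B → B → B
  one : B
  inv : B → B
  add_assoc : ∀ a b c, add (add a b) c = add a (add b c)
  zero_add : ∀ a, add zero a = a
  add_zero : ∀ a, add a zero = a
  neg_add : ∀ a, add (neg a) a = zero
  add_neg : ∀ a, add a (neg a) = zero
  mul_assoc : ∀ a b c, mul (mul a b) c = mul a (mul b c)
  one_mul : ∀ a, mul one a = a
  mul_one : ∀ a, mul a one = a
  inv_mul : ∀ a, mul (inv a) a = one
  mul_inv : ∀ a, mul a (inv a) = one
  add_comm : ∀ a b, add a b = add b a
  dist : ∀ a b c, mul a (add b c) = add (add (mul a b) (neg a)) (mul a c)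

theorem stmt5 (B : Type*) (S : LeftBrace B)
    (σ τ : B → B → B)
    (hσ : ∀ x y, σ x y = S.add (S.mul x y) (S.neg x))
    (hτ : ∀ y x, τ y x = S.mul (S.inv (σ x y)) (S.mul x y))
    (r : B × B → B × B) (hr : ∀ x y, r (x, y) = (σ x y, τ y x))
    (r12 r23 : B × B × B → B × B × B)
    (hr12 : ∀ x y z, r12 (x, y, z) = ((r (x, y)).1, (r (x, y)).2, z))
    (hr23 : ∀ x y z, r23 (x, y, z) = (x, r (y, z))) :
    r12 ∘ r23 ∘ r12 = r23 ∘ r12 ∘ r23 := by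
  letI : Add B := ⟨S.add⟩
  letI : Zero B := ⟨S.zero⟩
  letI : Neg B := ⟨S.neg⟩
  letI : Mul B := ⟨S.mul⟩
  letI : One B := ⟨S.one⟩
  letI : Inv B := ⟨S.inv⟩
  letI : AddCommGroup B :=
    { add_assoc := S.add_assoc, zero_add := S.zero_add, add_zero := S.add_zero,
      neg_add_cancel := S.neg_add, add_comm := S.add_comm,
      nsmul := nsmulRec, zsmul := zsmulRec }
  letI : Group B :=
    { mul_assoc := S.mul_assoc, one_mul := S.one_mul, mul_one := S.mul_one,
      inv_mul_cancel := S.inv_mul, zpow := zpowRec }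
  have dist : ∀ a b c : B, a * (b + c) = a * b - a + a * c := by
    intro a b c
    rw [sub_eq_add_neg]
    exact S.dist a b c
  have hσ' : ∀ x y : B, σ x y = x * y - x := by
    intro x y
    rw [hσ x y, sub_eq_add_neg]
    rfl
  have hτ' : ∀ y x : B, τ y x = (σ x y)⁻¹ * (x * y) := fun y x => hτ y x
  have mul_zero' : ∀ a : B, a * 0 = a := by
    intro a
    have h := dist a 0 0
    rw [add_zero] at h
    have h3 : a * 0 - a = 0 := by
      apply add_right_cancel (b := a * 0)
      rw [zero_add]
      exact h.symm
    rwa [sub_eq_zero] at h3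
  have one_eq : (1 : B) = 0 := by rw [← mul_zero' 1, one_mul]
  have mul_neg' : ∀ a b : B, a * (-b) = a - (a * b - a) := by
    intro a b
    have h := dist a b (-b)
    rw [add_neg_cancel, mul_zero'] at h
    rw [eq_sub_iff_add_eq, add_comm]
    exact h.symm
  have K1 : ∀ a b c : B, a * (b * c - b) = a * (b * c) - a * b + a := by
    intro a b c
    rw [sub_eq_add_neg, dist, mul_neg']
    abel
  have K5 : ∀ g m n : B, g * m - g * n = g * (m - n) - g := by
    intro g m n
    have h : g * (m - n + n) = g * (m - n) - g + g * n := dist g (m - n) n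
    rw [sub_add_cancel] at h
    rw [h]
    abel
  funext p
  obtain ⟨x, y, z⟩ := p
  simp only [Function.comp_apply, hr12, hr23, hr]
  have hab : σ x y * τ y x = x * y := by rw [hτ']; group
  have huv : σ y z * τ z y = y * z := by rw [hτ']; group
  have K2' : x * (y * z) - x * (σ y z) = σ x y := by
    rw [hσ' y z, hσ' x y, K5]
    have h : y * z - (y * z - y) = y := by abel
    rw [h]
  have G1 : σ (σ x y) (σ (τ y x) z) = σ x (σ y z) := by
    rw [hσ' (σ x y) (σ (τ y x) z), hσ' (τ y x) z, hσ' x (σ y z), hσ' y z,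
      K1 (σ x y) (τ y x) z, K1 x y z, ← mul_assoc, hab, mul_assoc]
    abel
  have hwv : τ (σ y z) x * τ z y = (σ x (σ y z))⁻¹ * (x * (y * z)) := by
    rw [hτ' (σ y z) x, hτ' z y]
    group
  have hac : σ x y * σ (τ y x) z = σ x (σ y z) + σ x y := by
    have G1' : σ x y * σ (τ y x) z - σ x y = σ x (σ y z) := by
      rw [← hσ' (σ x y) (σ (τ y x) z)]
      exact G1
    rw [← G1']
    abel
  have hsigwv : σ (τ (σ y z) x) (τ z y) =
      (σ x (σ y z))⁻¹ * (σ x y * σ (τ y x) z) := by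
    rw [hσ' (τ (σ y z) x) (τ z y), hwv, hτ' (σ y z) x, K5, K2', hac, dist,
      inv_mul_cancel, one_eq]
    abel
  have G2 : τ (σ (τ y x) z) (σ x y) = σ (τ (σ y z) x) (τ z y) := by
    rw [hτ' (σ (τ y x) z) (σ x y), G1, hsigwv]
  have G3 : τ z (τ y x) = τ (τ z y) (τ (σ y z) x) := by
    rw [hτ' (τ z y) (τ (σ y z) x), hsigwv, hwv, hτ' z (τ y x), hτ' y x]
    group
  simp only [Prod.mk.injEq]
  exact ⟨G1, G2, G3⟩
end

section
/- Let $B$ be a left skew brace, and define $\check r_{GV}(a,b) = (-a + a\circ b,\ (-a+a\circ b)^{-1}\circ a\circ b)$. Then $\check r_{GV}$ satisfies the set-theoretic braid equation on $B\times B\times B$. -/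
structure LeftSkewBrace (B : Type*) where
  add : B → B → B
  zero : B
  neg : B → B
  mul : B → B → B
  one : B
  inv : B → B
  add_assoc : ∀ a b c, add (add a b) c = add a (add b c)
  zero_add : ∀ a, add zero a = a
  add_zero : ∀ a, add a zero = a
  neg_add : ∀ a, add (neg a) a = zero
  add_neg : ∀ a, add a (neg a) = zero
  mul_assoc : ∀ a b c, mul (mul a b) c = mul a (mul b c)
  one_mul : ∀ a, mul one a = a
  mul_one : ∀ a, mul a one = a
  inv_mul : ∀ a, mul (inv a) a = one
  mul_inv : ∀ a, mul a (inv a) = one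
  dist : ∀ a b c, mul a (add b c) = add (add (mul a b) (neg a)) (mul a c)

namespace SB6aux

variable {B : Type*} (S : LeftSkewBrace B)

def mulGroup : Group B :=
  letI : Mul B := ⟨S.mul⟩
  letI : One B := ⟨S.one⟩
  letI : Inv B := ⟨S.inv⟩
  Group.ofLeftAxioms S.mul_assoc S.one_mul S.inv_mul

def addGroup : AddGroup B :=
  letI : Add B := ⟨S.add⟩
  letI : Zero B := ⟨S.zero⟩
  letI : Neg B := ⟨S.neg⟩
  AddGroup.ofLeftAxioms S.add_assoc S.zero_add S.neg_add

-- + group facts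
lemma a1 (a b : B) : S.add a (S.add (S.neg a) b) = b := by
  letI := addGroup S; exact add_neg_cancel_left a b

lemma a2 (a b : B) : S.add (S.neg a) (S.add a b) = b := by
  letI := addGroup S; exact neg_add_cancel_left a b

lemma a7 {a b c : B} (h : S.add a b = S.add a c) : b = c := by
  letI := addGroup S; exact add_left_cancel (a := a) h

-- ∘ group facts
lemma m1 (a b : B) : S.mul a (S.mul (S.inv a) b) = b := by
  letI := mulGroup S; exact mul_inv_cancel_left a b

lemma m4 {a b c : B} (h : S.mul a b = S.mul a c) : b = c := by
  letI := mulGroup S; exact mul_left_cancel (a := a) h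

def sig (a b : B) : B := S.add (S.neg a) (S.mul a b)

lemma one_eq_zero : S.one = S.zero := by
  have h := S.dist S.one S.one S.one
  rw [S.one_mul, S.one_mul, S.add_neg, S.zero_add] at h
  -- h : S.add S.one S.one = S.one
  have : S.add S.one S.one = S.add S.one S.zero := by rw [h, S.add_zero]
  exact a7 S this

lemma mul_zero (a : B) : S.mul a S.zero = a := by
  rw [← one_eq_zero S, S.mul_one]

lemma sig_zero (a : B) : sig S a S.zero = S.zero := by
  rw [sig, mul_zero, S.neg_add]

lemma mul_eq_add_sig (a b : B) : S.mul a b = S.add a (sig S a b) := by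
  rw [sig]; exact (a1 S a (S.mul a b)).symm

lemma sig_add (a b c : B) : sig S a (S.add b c) = S.add (sig S a b) (sig S a c) := by
  simp only [sig, S.dist]
  simp only [← S.add_assoc]

lemma sig_neg (a b : B) : sig S a (S.neg b) = S.neg (sig S a b) := by
  have h : S.add (sig S a b) (sig S a (S.neg b)) = S.zero := by
    rw [← sig_add, S.add_neg, sig_zero]
  have h2 := congrArg (S.add (S.neg (sig S a b))) h
  rw [a2, S.add_zero] at h2
  exact h2

lemma grp_addaux (a p q : B) :
    S.add (S.neg p) q =
      S.add (S.neg a) (S.add (S.add (S.add (S.neg (S.add p (S.neg a))) a) (S.neg a)) q) := by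
  letI := addGroup S
  show -p + q = -a + (((-(p + -a) + a) + -a) + q)
  rw [neg_add_rev, neg_neg, add_neg_cancel_right, add_assoc, neg_add_cancel_left]

lemma mul_neg (a b : B) : S.mul a (S.neg b) = S.add (S.neg (S.add (S.mul a b) (S.neg a))) a := by
  have h := S.dist a b (S.neg b)
  rw [S.add_neg, mul_zero] at h
  -- h : a = add (add (mul a b) (neg a)) (mul a (neg b))
  have h2 := congrArg (S.add (S.neg (S.add (S.mul a b) (S.neg a)))) h
  rw [a2] at h2
  exact h2.symm

lemma sig_comp (a b c : B) : sig S (S.mul a b) c = sig S a (sig S b c) := by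
  simp only [sig, S.dist, mul_neg, S.mul_assoc]
  exact grp_addaux S a (S.mul a b) (S.mul a (S.mul b c))

lemma sig_one (a : B) : sig S S.one a = a := by
  rw [sig, S.one_mul, one_eq_zero]
  have h : S.neg S.zero = S.zero := by
    letI := SB6aux.addGroup S; exact neg_zero
  rw [h, S.zero_add]

lemma sig_cancel (a b : B) : sig S a (sig S (S.inv a) b) = b := by
  rw [← sig_comp, S.mul_inv, sig_one]

lemma tau_formula (u v : B) :
    S.mul (S.inv u) v = sig S (S.inv u) (S.add (S.neg u) v) := by
  apply m4 S (a := u)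
  rw [m1, mul_eq_add_sig S u (sig S (S.inv u) (S.add (S.neg u) v)), ← sig_comp, S.mul_inv,
    sig_one, a1]

lemma grp3 {G : Type*} [Group G] (a b u v x y z : G) :
    b⁻¹ * ((a⁻¹ * (x * y)) * z) =
      ((u⁻¹ * (a * b))⁻¹) * ((u⁻¹ * (x * v)) * ((v⁻¹) * (y * z))) := by
  group

end SB6aux

theorem stmt6 (B : Type*) (S : LeftSkewBrace B)
    (σ τ : B → B → B)
    (hσ : ∀ a b, σ a b = S.add (S.neg a) (S.mul a b))
    (hτ : ∀ b a, τ b a = S.mul (S.inv (σ a b)) (S.mul a b))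
    (r : B × B → B × B) (hr : ∀ x y, r (x, y) = (σ x y, τ y x))
    (r12 r23 : B × B × B → B × B × B)
    (hr12 : ∀ x y z, r12 (x, y, z) = ((r (x, y)).1, (r (x, y)).2, z))
    (hr23 : ∀ x y z, r23 (x, y, z) = (x, r (y, z))) :
    r12 ∘ r23 ∘ r12 = r23 ∘ r12 ∘ r23 := by
  open SB6aux in
  have hσ' : ∀ a b, σ a b = sig S a b := hσ
  funext p
  obtain ⟨x, y, z⟩ := p
  simp only [Function.comp_apply, hr12, hr23, hr, hτ, hσ']
  have e1 : SB6aux.sig S (SB6aux.sig S x y) (SB6aux.sig S (S.mul (S.inv (SB6aux.sig S x y)) (S.mul x y)) z) = SB6aux.sig S x (SB6aux.sig S y z) := by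
    rw [← SB6aux.sig_comp, SB6aux.m1, SB6aux.sig_comp]
  have e2 : S.mul (S.inv (SB6aux.sig S (SB6aux.sig S x y) (SB6aux.sig S (S.mul (S.inv (SB6aux.sig S x y)) (S.mul x y)) z))) (S.mul (SB6aux.sig S x y) (SB6aux.sig S (S.mul (S.inv (SB6aux.sig S x y)) (S.mul x y)) z)) = SB6aux.sig S (S.mul (S.inv (SB6aux.sig S x (SB6aux.sig S y z))) (S.mul x (SB6aux.sig S y z))) (S.mul (S.inv (SB6aux.sig S y z)) (S.mul y z)) := by
    conv_lhs => rw [e1, SB6aux.tau_formula,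
      SB6aux.mul_eq_add_sig S (SB6aux.sig S x y), e1]
    conv_rhs => rw [SB6aux.sig_comp, SB6aux.sig_comp,
      SB6aux.tau_formula S (SB6aux.sig S y z), SB6aux.sig_cancel, SB6aux.sig_add,
      SB6aux.sig_neg, SB6aux.mul_eq_add_sig S y z, SB6aux.sig_add S x y (SB6aux.sig S y z)]
  refine Prod.ext ?_ (Prod.ext ?_ ?_)
  · exact e1
  · exact e2
  · show S.mul (S.inv (SB6aux.sig S (S.mul (S.inv (SB6aux.sig S x y)) (S.mul x y)) z))
        (S.mul (S.mul (S.inv (SB6aux.sig S x y)) (S.mul x y)) z) = _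
    rw [← e2, e1]
    letI := SB6aux.mulGroup S
    exact SB6aux.grp3 (SB6aux.sig S x y)
      (SB6aux.sig S (S.mul (S.inv (SB6aux.sig S x y)) (S.mul x y)) z)
      (SB6aux.sig S x (SB6aux.sig S y z)) (SB6aux.sig S y z) x y z
end

section
/- Let $\check r_{GV}$ be the Guarnieri–Vendramin map on a left skew brace $B$: $\check r_{GV}(a,b) = (-a + a\circ b,\ (-a+a\circ b)^{-1}\circ a\circ b)$. Then $\check r_{GV}$ is non-degenerate: the maps $b \mapsto -a + a\circ b$ are bijective for each $a$, and the maps $a \mapsto (-a+a\circ b)^{-1}\circ a\circ b$ are bijective for each $b$. -/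
namespace LeftSkewBrace

variable {B : Type*} (S : LeftSkewBrace B)

lemma neg_add_cancel_left (a b : B) : S.add (S.neg a) (S.add a b) = b := by
  rw [← S.add_assoc, S.neg_add, S.zero_add]

lemma add_neg_cancel_left (a b : B) : S.add a (S.add (S.neg a) b) = b := by
  rw [← S.add_assoc, S.add_neg, S.zero_add]

lemma add_left_cancel {a b c : B} (h : S.add a b = S.add a c) : b = c := by
  have h2 := congrArg (S.add (S.neg a)) h
  rwa [S.neg_add_cancel_left, S.neg_add_cancel_left] at h2

lemma neg_eq_of {a b : B} (h : S.add a b = S.zero) : S.neg a = b := by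
  have h2 := congrArg (S.add (S.neg a)) h
  rw [S.neg_add_cancel_left, S.add_zero] at h2; exact h2.symm

lemma neg_neg (a : B) : S.neg (S.neg a) = a := S.neg_eq_of (S.neg_add a)

lemma neg_add_rev (a b : B) :
    S.neg (S.add a b) = S.add (S.neg b) (S.neg a) := by
  apply S.neg_eq_of
  rw [S.add_assoc, ← S.add_assoc b, S.add_neg, S.zero_add, S.add_neg]

lemma inv_mul_cancel_left (a b : B) : S.mul (S.inv a) (S.mul a b) = b := by
  rw [← S.mul_assoc, S.inv_mul, S.one_mul]

lemma mul_inv_cancel_left (a b : B) : S.mul a (S.mul (S.inv a) b) = b := by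
  rw [← S.mul_assoc, S.mul_inv, S.one_mul]

lemma inv_eq_of {a b : B} (h : S.mul a b = S.one) : S.inv a = b := by
  have h2 := congrArg (S.mul (S.inv a)) h
  rw [S.inv_mul_cancel_left, S.mul_one] at h2; exact h2.symm

lemma inv_inv (a : B) : S.inv (S.inv a) = a := S.inv_eq_of (S.inv_mul a)

lemma inv_mul_rev (a b : B) :
    S.inv (S.mul a b) = S.mul (S.inv b) (S.inv a) := by
  apply S.inv_eq_of
  rw [S.mul_assoc, ← S.mul_assoc b, S.mul_inv, S.one_mul, S.mul_inv]

lemma inv_injective {a b : B} (h : S.inv a = S.inv b) : a = b := by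
  have h2 := congrArg S.inv h
  rwa [S.inv_inv, S.inv_inv] at h2

lemma mul_zero (a : B) : S.mul a S.zero = a := by
  have h := S.dist a S.zero S.zero
  rw [S.zero_add] at h
  -- h : mul a 0 = add (add (mul a 0) (neg a)) (mul a 0)
  have h2 : S.add (S.mul a S.zero) S.zero
      = S.add (S.mul a S.zero) (S.add (S.neg a) (S.mul a S.zero)) := by
    rw [S.add_zero, ← S.add_assoc]; exact h
  have h3 := S.add_left_cancel h2
  have h4 := congrArg (S.add a) h3.symm
  rwa [S.add_neg_cancel_left, S.add_zero] at h4

lemma one_eq_zero : S.one = S.zero := by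
  have h1 := S.mul_zero S.one
  have h2 := S.one_mul S.zero
  rw [h2] at h1
  exact h1.symm

lemma mul_neg (a y : B) :
    S.mul a (S.neg y) = S.add (S.add a (S.neg (S.mul a y))) a := by
  have h := S.dist a y (S.neg y)
  rw [S.add_neg, S.mul_zero] at h
  -- h : a = add (add (mul a y) (neg a)) (mul a (neg y))
  have h2 := congrArg (S.add (S.neg (S.add (S.mul a y) (S.neg a)))) h
  rw [S.neg_add_cancel_left, S.neg_add_rev, S.neg_neg] at h2
  rw [← h2, S.add_assoc]

/-- The key identity: `(a∘b)⁻¹ ∘ (-a + a∘b) = (a∘b)⁻¹ - b⁻¹`. -/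
lemma key (a b : B) :
    S.mul (S.inv (S.mul a b)) (S.add (S.neg a) (S.mul a b))
      = S.add (S.inv (S.mul a b)) (S.neg (S.inv b)) := by
  have ea : S.mul (S.inv (S.mul a b)) a = S.inv b := by
    rw [S.inv_mul_rev, S.mul_assoc, S.inv_mul, S.mul_one]
  rw [S.dist, S.inv_mul, S.one_eq_zero, S.add_zero, S.mul_neg, ea]
  rw [S.add_assoc (S.add (S.inv (S.mul a b)) (S.neg (S.inv b))), S.add_neg,
    S.add_zero]

/-- `(τ b a)⁻¹ = (a∘b)⁻¹ - b⁻¹`. -/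
lemma inv_tau {σ τ : B → B → B}
    (hσ : ∀ a b, σ a b = S.add (S.neg a) (S.mul a b))
    (hτ : ∀ b a, τ b a = S.mul (S.inv (σ a b)) (S.mul a b))
    (a b : B) :
    S.inv (τ b a) = S.add (S.inv (S.mul a b)) (S.neg (S.inv b)) := by
  rw [hτ, hσ, S.inv_mul_rev, S.inv_inv, S.key]

end LeftSkewBrace

theorem stmt7 (B : Type*) (S : LeftSkewBrace B)
    (σ τ : B → B → B)
    (hσ : ∀ a b, σ a b = S.add (S.neg a) (S.mul a b))
    (hτ : ∀ b a, τ b a = S.mul (S.inv (σ a b)) (S.mul a b)) :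
    (∀ a, Function.Bijective (fun b => σ a b)) ∧
    (∀ b, Function.Bijective (fun a => τ b a)) := by
  constructor
  · intro a
    apply Function.bijective_iff_has_inverse.mpr
    refine ⟨fun c => S.mul (S.inv a) (S.add a c), ?_, ?_⟩
    · intro b
      simp only [hσ]
      rw [S.add_neg_cancel_left, S.inv_mul_cancel_left]
    · intro c
      simp only [hσ]
      rw [S.mul_inv_cancel_left, S.neg_add_cancel_left]
  · intro b
    apply Function.bijective_iff_has_inverse.mpr
    refine ⟨fun t => S.mul (S.inv (S.add (S.inv t) (S.inv b))) (S.inv b),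
      ?_, ?_⟩
    · intro a
      simp only []
      rw [S.inv_tau hσ hτ, S.add_assoc, S.neg_add, S.add_zero, S.inv_inv,
        S.mul_assoc, S.mul_inv, S.mul_one]
    · intro t
      simp only []
      apply S.inv_injective
      rw [S.inv_tau hσ hτ]
      have hab : S.mul (S.mul (S.inv (S.add (S.inv t) (S.inv b))) (S.inv b)) b
          = S.inv (S.add (S.inv t) (S.inv b)) := by
        rw [S.mul_assoc, S.inv_mul, S.mul_one]
      rw [hab, S.inv_inv, S.add_assoc, S.add_neg, S.add_zero]
end

section
/- Let $B$ be a singular near brace, i.e. a near brace additionally satisfying $a - a\circ 0 = -a\circ 0 + a = 1$ for all $a\in B$. Then $0\circ 0 = -1$ and $1 + 1 = 0^{-1}$ (inverse in $(B,\circ)$), and $1 + a = a + 1$ for all $a\in B$. -/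
structure SingularNearBrace (B : Type*) where
  add : B → B → B
  zero : B
  neg : B → B
  mul : B → B → B
  one : B
  inv : B → B
  add_assoc : ∀ a b c, add (add a b) c = add a (add b c)
  zero_add : ∀ a, add zero a = a
  add_zero : ∀ a, add a zero = a
  neg_add : ∀ a, add (neg a) a = zero
  add_neg : ∀ a, add a (neg a) = zero
  mul_assoc : ∀ a b c, mul (mul a b) c = mul a (mul b c)
  one_mul : ∀ a, mul one a = a
  mul_one : ∀ a, mul a one = a
  inv_mul : ∀ a, mul (inv a) a = one
  mul_inv : ∀ a, mul a (inv a) = one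
  dist : ∀ a b c, mul a (add b c) = add (add (mul a b) (neg (mul a zero))) (mul a c)
  sing_r : ∀ a, add a (neg (mul a zero)) = one
  sing_l : ∀ a, add (neg (mul a zero)) a = one

theorem stmt12 (B : Type*) (S : SingularNearBrace B) :
    S.mul S.zero S.zero = S.neg S.one ∧
    S.add S.one S.one = S.inv S.zero ∧
    ∀ a, S.add S.one a = S.add a S.one := by
  have neg_neg : ∀ a, S.neg (S.neg a) = a := by
    intro a
    calc S.neg (S.neg a) = S.add (S.neg (S.neg a)) (S.add (S.neg a) a) := by
          rw [S.neg_add, S.add_zero]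
      _ = S.add (S.add (S.neg (S.neg a)) (S.neg a)) a := by rw [S.add_assoc]
      _ = a := by rw [S.neg_add, S.zero_add]
  have hneg00 : S.neg (S.mul S.zero S.zero) = S.one := by
    have := S.sing_r S.zero
    rwa [S.zero_add] at this
  have h00 : S.mul S.zero S.zero = S.neg S.one := by
    rw [← hneg00, neg_neg]
  have h01 : S.mul S.zero (S.add S.one S.one) = S.one := by
    rw [S.dist, S.mul_one, hneg00, S.zero_add, S.add_zero]
  have h11 : S.add S.one S.one = S.inv S.zero := by
    calc S.add S.one S.one = S.mul S.one (S.add S.one S.one) := (S.one_mul _).symm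
      _ = S.mul (S.mul (S.inv S.zero) S.zero) (S.add S.one S.one) := by rw [S.inv_mul]
      _ = S.mul (S.inv S.zero) (S.mul S.zero (S.add S.one S.one)) := S.mul_assoc _ _ _
      _ = S.inv S.zero := by rw [h01, S.mul_one]
  refine ⟨h00, h11, fun a => ?_⟩
  set b := S.mul a (S.inv S.zero) with hb
  have hba : S.mul b S.zero = a := by
    rw [hb, S.mul_assoc, S.inv_mul, S.mul_one]
  have h1 : S.add b (S.neg a) = S.one := by rw [← hba]; exact S.sing_r b
  have h2 : S.add (S.neg a) b = S.one := by rw [← hba]; exact S.sing_l b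
  have e1 : S.add S.one a = b := by
    rw [← h1, S.add_assoc, S.neg_add, S.add_zero]
  have e2 : S.add a S.one = b := by
    rw [← h2, ← S.add_assoc, S.add_neg, S.zero_add]
  rw [e1, e2]
end

section
/- Let $B$ be a singular near brace with $\sigma_a(b) = a\circ b - a\circ 0 + 1$. Then $\sigma_a(\sigma_b(c)) = \sigma_{a\circ b}(c) + 1$ for all $a,b,c\in B$. -/
theorem stmt14 (B : Type*) (S : SingularNearBrace B)
    (σ : B → B → B)
    (hσ : ∀ a b, σ a b = S.add (S.add (S.mul a b) (S.neg (S.mul a S.zero))) S.one) :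
    ∀ a b c, σ a (σ b c) = S.add (σ (S.mul a b) c) S.one := by
  intro a b c
  letI : Add B := ⟨S.add⟩
  letI : Zero B := ⟨S.zero⟩
  letI : Neg B := ⟨S.neg⟩
  letI : AddGroup B := AddGroup.ofLeftAxioms S.add_assoc S.zero_add S.neg_add
  have hadd : ∀ x y : B, S.add x y = x + y := fun _ _ => rfl
  have hneg : ∀ x : B, S.neg x = -x := fun _ => rfl
  have hzero : (S.zero : B) = 0 := rfl
  have dist : ∀ x y z : B, S.mul x (y + z) = S.mul x y + -(S.mul x 0) + S.mul x z :=
    fun x y z => by simpa [hadd, hneg, hzero] using S.dist x y z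
  have sing : ∀ x : B, x + -(S.mul x 0) = S.one :=
    fun x => by simpa [hadd, hneg, hzero] using S.sing_r x
  have hmneg : ∀ x y : B, S.mul x (-y) = S.mul x 0 - S.mul x y + S.mul x 0 := by
    intro x y
    have h := dist x y (-y)
    rw [add_neg_cancel] at h
    have h2 := eq_neg_add_of_add_eq h.symm
    rw [neg_add_rev, neg_neg] at h2
    rw [h2, sub_eq_add_neg, add_assoc]
  rw [hσ, hσ, hσ]
  simp only [hadd, hneg, hzero]
  rw [dist, dist, hmneg, S.mul_assoc a b c, S.mul_assoc a b (0 : B), S.mul_one a,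
    ← sing a, sub_eq_add_neg]
  simp only [add_assoc, neg_add_cancel_left, add_neg_cancel_left, neg_add_cancel,
    add_neg_cancel, add_zero, zero_add]
end

section
/- Let $B$ be a singular near brace with $\sigma_a(b) = a\circ b - a\circ 0 + 1$ and $\tau_b(a) = \sigma_a(b)^{-1}\circ a\circ b$. Then $\sigma_a(b)\circ\sigma_{\tau_b(a)}(c) = \sigma_a(b\circ c) + 1$ for all $a,b,c\in B$. -/
theorem stmt15 (B : Type*) (S : SingularNearBrace B)
    (σ τ : B → B → B)
    (hσ : ∀ a b, σ a b = S.add (S.add (S.mul a b) (S.neg (S.mul a S.zero))) S.one)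
    (hτ : ∀ b a, τ b a = S.mul (S.inv (σ a b)) (S.mul a b))
    : ∀ a b c, S.mul (σ a b) (σ (τ b a) c) = S.add (σ a (S.mul b c)) S.one := by
  letI : Add B := ⟨S.add⟩
  letI : Zero B := ⟨S.zero⟩
  letI : Neg B := ⟨S.neg⟩
  letI : Mul B := ⟨S.mul⟩
  letI : One B := ⟨S.one⟩
  letI : Inv B := ⟨S.inv⟩
  letI : AddGroup B := AddGroup.ofLeftAxioms S.add_assoc S.zero_add S.neg_add
  letI : Group B := Group.ofLeftAxioms S.mul_assoc S.one_mul S.inv_mul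
  have dist : ∀ a b c : B, a * (b + c) = a * b + -(a * 0) + a * c := S.dist
  have sing_r : ∀ a : B, a + -(a * 0) = 1 := S.sing_r
  have sing_l : ∀ a : B, -(a * 0) + a = 1 := S.sing_l
  have hσ' : ∀ a b : B, σ a b = a * b + -(a * 0) + 1 := hσ
  have hτ' : ∀ b a : B, τ b a = (σ a b)⁻¹ * (a * b) := hτ
  have h0r : ∀ a : B, a * 0 = a + -1 := by
    intro a
    have h : -(a * 0) = 1 + -a := by
      rw [← sing_l a, add_assoc, add_neg_cancel, add_zero]
    calc a * 0 = -(-(a * 0)) := by rw [neg_neg]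
      _ = -(1 + -a) := by rw [h]
      _ = a + -1 := by rw [neg_add_rev, neg_neg]
  have h0l : ∀ a : B, a * 0 = -1 + a := by
    intro a
    have h : -(a * 0) = -a + 1 := by
      have hs := sing_r a
      have : a + -(a * 0) = a + (-a + 1) := by
        rw [hs, ← add_assoc, add_neg_cancel, zero_add]
      exact add_left_cancel this
    calc a * 0 = -(-(a * 0)) := by rw [neg_neg]
      _ = -(-a + 1) := by rw [h]
      _ = -1 + a := by rw [neg_add_rev, neg_neg]
  have hcomm : ∀ a : B, a + 1 = 1 + a := by
    intro a
    have h : a + -1 = -1 + a := (h0r a).symm.trans (h0l a)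
    calc a + 1 = 1 + (-1 + a) + 1 := by rw [← add_assoc, add_neg_cancel, zero_add]
      _ = 1 + (a + -1) + 1 := by rw [← h]
      _ = 1 + a := by rw [add_assoc, add_assoc, neg_add_cancel, add_zero]
  have hneg : ∀ s x : B, s * (-x) = s * 0 + -(s * x) + s * 0 := by
    intro s x
    have h := dist s x (-x)
    rw [add_neg_cancel] at h
    have h2 := congrArg (fun y => -(s * x + -(s * 0)) + y) h
    simp only [neg_add_cancel_left] at h2
    rw [neg_add_rev, neg_neg] at h2
    exact h2.symm
  intro a b c
  have hst : σ a b * τ b a = a * b := by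
    rw [hτ', ← mul_assoc, mul_inv_cancel, one_mul]
  have h1 : σ a b * (τ b a * c) = a * (b * c) := by
    rw [← mul_assoc, hst, mul_assoc]
  have h2 : σ a b * (τ b a * 0) = a * b + -1 := by
    rw [← mul_assoc, hst, h0r]
  show σ a b * σ (τ b a) c = σ a (b * c) + 1
  calc σ a b * σ (τ b a) c
      = σ a b * ((τ b a * c + -(τ b a * 0)) + 1) := by rw [hσ' (τ b a) c]
    _ = σ a b * (τ b a * c + -(τ b a * 0)) + -(σ a b * 0) + σ a b * 1 := dist _ _ _
    _ = (σ a b * (τ b a * c) + -(σ a b * 0) + σ a b * (-(τ b a * 0))) + -(σ a b * 0)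
          + σ a b := by rw [dist, mul_one]
    _ = (a * (b * c) + -(σ a b * 0) + (σ a b * 0 + -(a * b + -1) + σ a b * 0))
          + -(σ a b * 0) + σ a b := by rw [h1, hneg, h2]
    _ = a * (b * c) + (1 + (-(a * b) + σ a b)) := by
        rw [neg_add_rev, neg_neg]
        simp only [add_assoc, add_neg_cancel_left, neg_add_cancel_left]
    _ = a * (b * c) + (1 + (-(a * 0) + 1)) := by
        rw [hσ' a b]
        simp only [add_assoc, neg_add_cancel_left]
    _ = σ a (b * c) + 1 := by
        rw [hσ', ← hcomm (-(a * 0) + 1)]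
        simp only [add_assoc]
end

section
/- Let $B$ be a singular near brace and define $\check r(a,b) = (\sigma_a(b), \tau_b(a))$ with $\sigma_a(b) = a\circ b - a\circ 0 + 1$ and $\tau_b(a) = \sigma_a(b)^{-1}\circ a\circ b$. Then $\check r$ satisfies the set-theoretic braid equation: $(\check r\times\mathrm{id})(\mathrm{id}\times\check r)(\check r\times\mathrm{id}) = (\mathrm{id}\times\check r)(\check r\times\mathrm{id})(\mathrm{id}\times\check r)$. -/
namespace SNBAux
variable {G : Type*} [AddGroup G] [Group G]

/-- The lambda map of a singular near brace. -/
def lam (a b : G) : G := a * b - a * 0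

/-- The sigma component of the solution. -/
def sig (a b : G) : G := lam a b + 1

/-- The tau component of the solution. -/
def tau (b a : G) : G := (sig a b)⁻¹ * (a * b)

theorem st (a b : G) : sig a b * tau b a = a * b := mul_inv_cancel_left _ _

theorem st' (a b c : G) : sig a b * (tau b a * c) = a * (b * c) := by
  rw [← mul_assoc, st, mul_assoc]

theorem addid (hc : ∀ a : G, a + 1 = 1 + a) (A Bv : G) :
    (A + 1 + Bv) + 1 - (A + 1 + 1) = ((A + (Bv - 1)) + 1 - (A + 1)) + 1 := by
  simp only [sub_eq_add_neg, neg_add_rev, add_assoc]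
  simp only [add_neg_cancel_left, neg_add_cancel_left]
  rw [hc (-A), neg_add_cancel_left, ← hc (Bv + (-1 + -A)), add_assoc Bv,
    add_assoc (-1 : G), hc (-A), neg_add_cancel_left]

section
variable (hd : ∀ a b c : G, a * (b + c) = a * b - a * 0 + a * c)
  (hsr : ∀ a : G, a - a * 0 = 1) (hsl : ∀ a : G, -(a * 0) + a = 1)

include hsl in
theorem h0 (a : G) : a * 0 = a - 1 := by
  have h : -(a * 0) = 1 - a := eq_sub_iff_add_eq.mpr (hsl a)
  calc a * 0 = -(-(a * 0)) := (neg_neg _).symm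
    _ = -(1 - a) := by rw [h]
    _ = a - 1 := neg_sub _ _

include hsr in
theorem h0' (a : G) : a * 0 = -1 + a := by
  have h : a = 1 + a * 0 := sub_eq_iff_eq_add.mp (hsr a)
  conv_rhs => rw [h]
  rw [neg_add_cancel_left]

include hsr hsl in
theorem hm1 (a : G) : a + -1 = -1 + a := by
  have := (h0 hsl a).symm.trans (h0' hsr a)
  rwa [sub_eq_add_neg] at this

include hsr hsl in
theorem hc (a : G) : a + 1 = 1 + a := by
  have h := congrArg Neg.neg (hm1 hsr hsl (-a))
  simpa [neg_add_rev] using h.symm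

include hd in
theorem lamadd (a b c : G) : lam a (b + c) = lam a b + lam a c := by
  simp [lam, hd, sub_eq_add_neg, add_assoc]

theorem lamzero (a : G) : lam a 0 = 0 := sub_self _

include hd in
theorem lamneg (a b : G) : lam a (-b) = -lam a b := by
  have h : lam a b + lam a (-b) = 0 := by
    rw [← lamadd hd, add_neg_cancel, lamzero]
  exact (neg_eq_of_add_eq_zero_right h).symm

include hsr hsl in
theorem lamone (a : G) : lam a 1 = 1 := by
  have h : a - (a - 1) = a + 1 - a := by simp [sub_eq_add_neg, add_assoc]
  rw [lam, mul_one, h0 hsl, h, hc hsr hsl, add_sub_cancel_right]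

theorem lamid (b : G) : lam 1 b = b := by simp [lam]

include hd in
theorem lamcomp (a b c : G) : lam a (lam b c) = lam (a * b) c := by
  have h1 : lam a (lam b c) = lam a (b * c) - lam a (b * 0) := by
    rw [show lam b c = b * c + -(b * 0) from sub_eq_add_neg _ _, lamadd hd,
      lamneg hd, ← sub_eq_add_neg]
  rw [h1]
  simp only [lam, mul_assoc, sub_eq_add_neg, neg_add_rev, neg_neg]
  simp [← add_assoc]

include hsl in
theorem muleq (a b : G) : a * b = lam a b + (a - 1) := by
  rw [lam, ← h0 hsl, sub_add_cancel]

include hd hsr hsl in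
theorem tauform (a b : G) :
    tau b a = lam (sig a b)⁻¹ (a * b) + 1 - lam (sig a b)⁻¹ (sig a b) := by
  have hst : lam (sig a b) (tau b a) = a * b + (1 + -(sig a b)) := by
    have h := muleq hsl (sig a b) (tau b a)
    rw [st, sub_eq_add_neg] at h
    rw [h]
    simp [add_assoc]
  have : tau b a = lam (sig a b)⁻¹ (lam (sig a b) (tau b a)) := by
    rw [lamcomp hd, inv_mul_cancel, lamid]
  rw [this, hst, lamadd hd, lamadd hd, lamone hsr hsl, lamneg hd]
  simp [sub_eq_add_neg, add_assoc]

include hd hsr hsl in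
theorem comp1 (x y z : G) : sig (sig x y) (sig (tau y x) z) = sig x (sig y z) := by
  show lam (sig x y) (lam (tau y x) z + 1) + 1 = lam x (lam y z + 1) + 1
  rw [lamadd hd, lamone hsr hsl, lamcomp hd, st, lamadd hd, lamone hsr hsl, lamcomp hd]

include hd hsr hsl in
theorem comp2 (x y z : G) :
    tau (sig (tau y x) z) (sig x y) = sig (tau (sig y z) x) (tau z y) := by
  set U : G := sig x (sig y z) with hUdef
  have hU : U = lam (x * y) z + 1 + 1 := by
    show lam x (lam y z + 1) + 1 = _
    rw [lamadd hd, lamone hsr hsl, lamcomp hd]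
  set A : G := lam (U⁻¹ * (x * y)) z with hAdef
  set Bv : G := lam (U⁻¹ * x) y with hBdef
  -- product of the first pair
  have hAB : sig x y * sig (tau y x) z = lam (x * y) z + 1 + lam x y := by
    rw [muleq hsl (sig x y) (sig (tau y x) z)]
    have h1 : lam (sig x y) (sig (tau y x) z) = lam (x * y) z + 1 := by
      show lam (sig x y) (lam (tau y x) z + 1) = _
      rw [lamadd hd, lamone hsr hsl, lamcomp hd, st]
    rw [h1, show sig x y - 1 = lam x y from add_sub_cancel_right _ _]
  -- left hand side
  have hL : tau (sig (tau y x) z) (sig x y) = (A + 1 + Bv) + 1 - (A + 1 + 1) := by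
    rw [tauform hd hsr hsl, comp1 hd hsr hsl, ← hUdef]
    have e2 : lam U⁻¹ (sig x y * sig (tau y x) z) = A + 1 + Bv := by
      rw [hAB, lamadd hd, lamadd hd, lamone hsr hsl, lamcomp hd, lamcomp hd]
    have e3 : lam U⁻¹ U = A + 1 + 1 := by
      calc lam U⁻¹ U = lam U⁻¹ (lam (x * y) z + 1 + 1) := by rw [← hU]
        _ = A + 1 + 1 := by rw [lamadd hd, lamadd hd, lamone hsr hsl, lamcomp hd]
    rw [e2, e3]
  -- right hand side
  have hTV : tau (sig y z) x * (sig y z)⁻¹ = U⁻¹ * x := by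
    rw [hUdef]; simp [tau, mul_assoc]
  have e4 : lam (U⁻¹ * x) (y * z) = A + (Bv - 1) := by
    rw [muleq hsl y z, sub_eq_add_neg y 1, lamadd hd, lamadd hd, lamneg hd,
      lamone hsr hsl, lamcomp hd, mul_assoc, ← sub_eq_add_neg]
  have e5 : lam (U⁻¹ * x) (sig y z) = A + 1 := by
    show lam (U⁻¹ * x) (lam y z + 1) = _
    rw [lamadd hd, lamone hsr hsl, lamcomp hd, mul_assoc]
  have hR : sig (tau (sig y z) x) (tau z y) = ((A + (Bv - 1)) + 1 - (A + 1)) + 1 := by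
    show lam (tau (sig y z) x) (tau z y) + 1 = _
    rw [tauform hd hsr hsl y z, sub_eq_add_neg, lamadd hd, lamadd hd,
      lamone hsr hsl, lamneg hd, lamcomp hd, lamcomp hd, hTV, e4, e5, ← sub_eq_add_neg]
  rw [hL, hR]
  exact addid (hc hsr hsl) A Bv

include hd hsr hsl in
theorem comp3 (x y z : G) :
    tau z (tau y x) = tau (tau z y) (tau (sig y z) x) := by
  have h1 : sig (sig x y) (sig (tau y x) z) *
      (tau (sig (tau y x) z) (sig x y) * tau z (tau y x)) = x * (y * z) := by
    rw [st', st, st']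
  have h2 : sig x (sig y z) *
      (sig (tau (sig y z) x) (tau z y) * tau (tau z y) (tau (sig y z) x)) = x * (y * z) := by
    rw [st, ← mul_assoc, st, mul_assoc, st]
  have h := h1.trans h2.symm
  rw [comp1 hd hsr hsl, comp2 hd hsr hsl] at h
  exact mul_left_cancel (mul_left_cancel h)

end
end SNBAux

theorem stmt16 (B : Type*) (S : SingularNearBrace B)
    (σ τ : B → B → B)
    (hσ : ∀ a b, σ a b = S.add (S.add (S.mul a b) (S.neg (S.mul a S.zero))) S.one)
    (hτ : ∀ b a, τ b a = S.mul (S.inv (σ a b)) (S.mul a b))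
    (r : B × B → B × B) (hr : ∀ x y, r (x, y) = (σ x y, τ y x))
    (r12 r23 : B × B × B → B × B × B)
    (hr12 : ∀ x y z, r12 (x, y, z) = ((r (x, y)).1, (r (x, y)).2, z))
    (hr23 : ∀ x y z, r23 (x, y, z) = (x, r (y, z))) :
    r12 ∘ r23 ∘ r12 = r23 ∘ r12 ∘ r23 := by
  letI : Add B := ⟨S.add⟩
  letI : Zero B := ⟨S.zero⟩
  letI : Neg B := ⟨S.neg⟩
  letI : Mul B := ⟨S.mul⟩
  letI : One B := ⟨S.one⟩
  letI : Inv B := ⟨S.inv⟩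
  letI : AddGroup B := AddGroup.ofLeftAxioms S.add_assoc S.zero_add S.neg_add
  letI : Group B := Group.ofLeftAxioms S.mul_assoc S.one_mul S.inv_mul
  have hd : ∀ a b c : B, a * (b + c) = a * b - a * 0 + a * c := S.dist
  have hsr : ∀ a : B, a - a * 0 = 1 := S.sing_r
  have hsl : ∀ a : B, -(a * 0) + a = 1 := S.sing_l
  have hσ2 : ∀ a b : B, σ a b = SNBAux.sig a b := fun a b => hσ a b
  have hτ2 : ∀ b a : B, τ b a = SNBAux.tau b a := fun b a => by
    rw [hτ, hσ2]; rfl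
  funext p
  obtain ⟨x, y, z⟩ := p
  simp only [Function.comp_apply, hr12, hr23, hr]
  simp only [hr12, hr23, hr, hσ2, hτ2]
  exact Prod.ext (SNBAux.comp1 hd hsr hsl x y z)
    (Prod.ext (SNBAux.comp2 hd hsr hsl x y z) (SNBAux.comp3 hd hsr hsl x y z))
end

section
/- Let $(X,\check r)$ with $\check r(x,y)=(\sigma_x(y),\tau_y(x))$ be an involutive non-degenerate solution of the set-theoretic braid equation, and let $k: X\to X$ be $\tau$-equivariant, i.e. $k(\tau_y(x)) = \tau_y(k(x))$ for all $x,y$. Then $k$ is a reflection: $\check r(k\times\mathrm{id})\check r(k\times\mathrm{id}) = (k\times\mathrm{id})\check r(k\times\mathrm{id})\check r$. -/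
theorem stmt17 (X : Type*)
    (σ τ : X → X → X)
    (r : X × X → X × X) (hr : ∀ x y, r (x, y) = (σ x y, τ y x))
    (hinv : ∀ p, r (r p) = p)
    (hσb : ∀ x, Function.Bijective (σ x))
    (hτb : ∀ y, Function.Bijective (τ y))
    (r12 r23 : X × X × X → X × X × X)
    (hr12 : ∀ x y z, r12 (x, y, z) = ((r (x, y)).1, (r (x, y)).2, z))
    (hr23 : ∀ x y z, r23 (x, y, z) = (x, r (y, z)))
    (hbraid : r12 ∘ r23 ∘ r12 = r23 ∘ r12 ∘ r23)
    (k : X → X)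
    (K : X × X → X × X) (hK : ∀ x y, K (x, y) = (k x, y))
    (hequiv : ∀ x y, k (τ y x) = τ y (k x)) :
    ∀ p, r (K (r (K p))) = K (r (K (r p))) := by
  intro p
  obtain ⟨x, y⟩ := p
  have inv2 : ∀ a b, τ (τ b a) (σ a b) = b := by
    intro a b
    have h := hinv (a, b)
    rw [hr a b, hr] at h
    exact congrArg Prod.snd h
  simp only [hK, hr]
  have hy1 : τ (τ y (k x)) (k (σ (k x) y)) = k y := by
    rw [← hequiv, inv2]
  have hy2 : τ (τ y x) (k (σ x y)) = k y := by
    rw [← hequiv, inv2]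
  have first : σ (k (σ (k x) y)) (τ y (k x)) = k (σ (k (σ x y)) (τ y x)) := by
    apply (hτb (k y)).injective
    have L : τ (k y) (σ (k (σ (k x) y)) (τ y (k x))) = τ y (k x) := by
      have h := inv2 (k (σ (k x) y)) (τ y (k x))
      rwa [hy1] at h
    have R : τ (k y) (σ (k (σ x y)) (τ y x)) = τ y x := by
      have h := inv2 (k (σ x y)) (τ y x)
      rwa [hy2] at h
    rw [L]
    simp only [← hequiv]
    rw [R]
  exact Prod.ext first (hy1.trans hy2.symm)
end

section
/- Let $(X,\check r)$ be an involutive non-degenerate solution of the braid equation, $\check r(x,y)=(\sigma_x(y),\tau_y(x))$. A map $k:X\to X$ satisfies the reflection equation $\check r(k\times\mathrm{id})\check r(k\times\mathrm{id}) = (k\times\mathrm{id})\check r(k\times\mathrm{id})\check r$ if and only if for all $x,y\in X$: $\tau_{\tau_y(x)}(k(\sigma_x(y))) = \tau_{\tau_y(k(x))}(k(\sigma_{k(x)}(y)))$. -/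
theorem stmt18 (X : Type*)
    (σ τ : X → X → X)
    (r : X × X → X × X) (hr : ∀ x y, r (x, y) = (σ x y, τ y x))
    (hinv : ∀ p, r (r p) = p)
    (hσb : ∀ x, Function.Bijective (σ x))
    (hτb : ∀ y, Function.Bijective (τ y))
    (r12 r23 : X × X × X → X × X × X)
    (hr12 : ∀ x y z, r12 (x, y, z) = ((r (x, y)).1, (r (x, y)).2, z))
    (hr23 : ∀ x y z, r23 (x, y, z) = (x, r (y, z)))
    (hbraid : r12 ∘ r23 ∘ r12 = r23 ∘ r12 ∘ r23)
    (k : X → X)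
    (K : X × X → X × X) (hK : ∀ x y, K (x, y) = (k x, y))
    :
    (∀ p, r (K (r (K p))) = K (r (K (r p)))) ↔
    (∀ x y, τ (τ y x) (k (σ x y)) = τ (τ y (k x)) (k (σ (k x) y))) := by
  have hinv1 : ∀ x y, σ (σ x y) (τ y x) = x := by
    intro x y
    have h := hinv (x, y)
    rw [hr, hr] at h
    exact congrArg Prod.fst h
  have hinv2 : ∀ x y, τ (τ y x) (σ x y) = y := by
    intro x y
    have h := hinv (x, y)
    rw [hr, hr] at h
    exact congrArg Prod.snd h
  constructor
  · intro h x y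
    have hp := h (x, y)
    simp only [hr, hK] at hp
    exact (congrArg Prod.snd hp).symm
  · intro h p
    obtain ⟨x, y⟩ := p
    simp only [hr, hK]
    have hsnd : τ (τ y (k x)) (k (σ (k x) y)) = τ (τ y x) (k (σ x y)) := (h x y).symm
    have hfst : σ (k (σ (k x) y)) (τ y (k x)) = k (σ (k (σ x y)) (τ y x)) := by
      apply (hτb (τ (τ y (k x)) (k (σ (k x) y)))).1
      have e2 := h (σ x y) (τ y x)
      rw [hinv1, hinv2] at e2
      calc τ (τ (τ y (k x)) (k (σ (k x) y))) (σ (k (σ (k x) y)) (τ y (k x)))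
          = τ y (k x) := hinv2 (k (σ (k x) y)) (τ y (k x))
        _ = τ (τ (τ y x) (k (σ x y))) (k (σ (k (σ x y)) (τ y x))) := e2
        _ = τ (τ (τ y (k x)) (k (σ (k x) y))) (k (σ (k (σ x y)) (τ y x))) := by rw [hsnd]
    exact Prod.ext hfst hsnd
end

section
/- Let $(X,\check r)$ be an involutive non-degenerate solution of the braid equation coming from a left brace $B$ (so $X\subseteq B$, $\sigma_x(y)=x\circ y - x$, $\tau_y(x)=\sigma_x(y)^{-1}\circ x\circ y$), and let $c\in B$ be central in $(B,\circ)$ (i.e. $c\circ x = x\circ c$ for all $x$) with $\tau_c(X)\subseteq X$. Then $k(x) := \tau_c(x)$ is $\tau$-equivariant, $k(\tau_y(x)) = \tau_y(k(x))$ for all $x,y$, and hence a reflection of $(X,\check r)$. -/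
/-!
The map `(x, y) ↦ τ_y x` is a right action of `(B, ∘)` on `B`, i.e. `τ_z τ_y = τ_{y ∘ z}`, since
`σ_x(y) ∘ λ_{τ_y x}(z) = x ∘ y ∘ z - x = σ_x(y ∘ z)`, where `λ_a(x) = a ∘ x - a` is an action of
`(B, ∘)` by additive maps and `σ_x = λ_x`. For central `c` this gives
`τ_c τ_y = τ_{y ∘ c} = τ_{c ∘ y} = τ_y τ_c`. Any map commuting with every `τ_y` satisfies the
reflection equation of an involutive solution whose maps `τ_y` are injective: the second
components agree by involutivity, and the first ones have the same image under `τ_{k y}`.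
-/

open Function

theorem reflection_of_commute_tau {α : Type*} {σ τ : α → α → α} {r : α × α → α × α}
    (hr : ∀ x y, r (x, y) = (σ x y, τ y x)) (hτσ : ∀ x y, τ (τ y x) (σ x y) = y)
    (hτ : ∀ y, Injective (τ y)) {k : α → α} (hk : ∀ x y, k (τ y x) = τ y (k x))
    {K : α × α → α × α} (hK : ∀ x y, K (x, y) = (k x, y)) (p : α × α) :
    r (K (r (K p))) = K (r (K (r p))) := by
  obtain ⟨x, y⟩ := p
  simp only [hK, hr, Prod.mk.injEq]
  have hsnd_left : τ (τ y (k x)) (k (σ (k x) y)) = k y := by rw [← hk, hτσ]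
  have hsnd_right : τ (τ y x) (k (σ x y)) = k y := by rw [← hk, hτσ]
  refine ⟨hτ (k y) ?_, hsnd_left.trans hsnd_right.symm⟩
  calc τ (k y) (σ (k (σ (k x) y)) (τ y (k x)))
      = τ y (k x) := by rw [← hsnd_left, hτσ]
    _ = k (τ (τ (τ y x) (k (σ x y))) (σ (k (σ x y)) (τ y x))) := by rw [hτσ, hk]
    _ = τ (k y) (k (σ (k (σ x y)) (τ y x))) := by rw [hk, hsnd_right]

namespace LeftBrace

variable {B : Type*}

def Carrier (_ : LeftBrace B) : Type _ := B

variable (S : LeftBrace B)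

instance : Zero S.Carrier := ⟨S.zero⟩
instance : Add S.Carrier := ⟨S.add⟩
instance : Neg S.Carrier := ⟨S.neg⟩
instance : One S.Carrier := ⟨S.one⟩
instance : Mul S.Carrier := ⟨S.mul⟩
instance : Inv S.Carrier := ⟨S.inv⟩

instance : AddCommGroup S.Carrier where
  add_assoc := S.add_assoc
  zero_add := S.zero_add
  add_zero := S.add_zero
  neg_add_cancel := S.neg_add
  add_comm := S.add_comm
  nsmul := nsmulRec
  zsmul := zsmulRec

instance : Group S.Carrier where
  mul_assoc := S.mul_assoc
  one_mul := S.one_mul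
  mul_one := S.mul_one
  inv_mul_cancel := S.inv_mul

variable {S}

theorem mul_add_eq (a x y : S.Carrier) : a * (x + y) = a * x - a + a * y := by
  rw [sub_eq_add_neg]
  exact S.dist a x y

def lam (a : S.Carrier) : S.Carrier →+ S.Carrier :=
  AddMonoidHom.mk' (fun x => a * x - a) fun x y => by
    rw [mul_add_eq]
    abel

theorem lam_apply (a x : S.Carrier) : lam a x = a * x - a := rfl

theorem mul_eq_lam_add (a x : S.Carrier) : a * x = lam a x + a := (sub_add_cancel _ _).symm

theorem mul_zero (a : S.Carrier) : a * 0 = a :=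
  sub_eq_zero.mp (map_zero (lam a))

theorem zero_eq_one : (0 : S.Carrier) = 1 := by
  rw [← _root_.one_mul (0 : S.Carrier), mul_zero]

theorem lam_lam (a b x : S.Carrier) : lam a (lam b x) = lam (a * b) x := by
  simp only [lam_apply, map_sub (lam a), _root_.mul_assoc]
  abel

def tau (y x : S.Carrier) : S.Carrier := (lam x y)⁻¹ * (x * y)

theorem lam_mul_tau (x y : S.Carrier) : lam x y * tau y x = x * y :=
  mul_inv_cancel_left _ _

theorem tau_tau_lam (x y : S.Carrier) : tau (tau y x) (lam x y) = y := by
  have hlam : lam (lam x y) (tau y x) = x := by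
    rw [lam_apply, lam_mul_tau, lam_apply]
    abel
  rw [tau, hlam, lam_mul_tau, inv_mul_cancel_left]

theorem tau_tau (x y z : S.Carrier) : tau z (tau y x) = tau (y * z) x := by
  have hlam : lam x y * lam (tau y x) z = lam x (y * z) := by
    rw [mul_eq_lam_add, lam_lam, lam_mul_tau]
    simp only [lam_apply, _root_.mul_assoc]
    abel
  show (lam (tau y x) z)⁻¹ * (tau y x * z) = (lam x (y * z))⁻¹ * (x * (y * z))
  rw [← hlam, mul_inv_rev, tau, _root_.mul_assoc, _root_.mul_assoc, _root_.mul_assoc]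

theorem tau_one (x : S.Carrier) : tau 1 x = x := by
  rw [tau, lam_apply, _root_.mul_one, sub_self, zero_eq_one, inv_one, _root_.one_mul]

theorem tau_injective (y : S.Carrier) : Injective (tau y) :=
  LeftInverse.injective (g := tau y⁻¹) fun x => by rw [tau_tau, mul_inv_cancel, tau_one]

theorem tau_comm_of_forall_mul_comm {c : S.Carrier} (hc : ∀ x, c * x = x * c) (x y : S.Carrier) :
    tau c (tau y x) = tau y (tau c x) := by
  rw [tau_tau, tau_tau, hc]

end LeftBrace

theorem stmt19_general (B : Type*) (S : LeftBrace B)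
    (σ τ : B → B → B)
    (hσ : ∀ x y, σ x y = S.add (S.mul x y) (S.neg x))
    (hτ : ∀ y x, τ y x = S.mul (S.inv (σ x y)) (S.mul x y))
    (r : B × B → B × B) (hr : ∀ x y, r (x, y) = (σ x y, τ y x))
    (c : B) (hc : ∀ x, S.mul c x = S.mul x c)
    (k : B → B) (hk : ∀ x, k x = τ c x)
    (K : B × B → B × B) (hK : ∀ x y, K (x, y) = (k x, y)) :
    (∀ x y, k (τ y x) = τ y (k x)) ∧
    (∀ p, r (K (r (K p))) = K (r (K (r p)))) := by
  obtain rfl : σ = fun x y : S.Carrier => LeftBrace.lam x y :=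
    funext₂ fun (x y : S.Carrier) => (hσ x y).trans (sub_eq_add_neg (x * y) x).symm
  obtain rfl : τ = LeftBrace.tau (S := S) := funext₂ hτ
  obtain rfl : k = LeftBrace.tau (S := S) c := funext hk
  have hcomm := LeftBrace.tau_comm_of_forall_mul_comm (S := S) hc
  exact ⟨hcomm,
    reflection_of_commute_tau hr LeftBrace.tau_tau_lam LeftBrace.tau_injective hcomm hK⟩

theorem stmt19 (B : Type*) (S : LeftBrace B)
    (σ τ : B → B → B)
    (hσ : ∀ x y, σ x y = S.add (S.mul x y) (S.neg x))
    (hτ : ∀ y x, τ y x = S.mul (S.inv (σ x y)) (S.mul x y))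
    (r : B × B → B × B) (hr : ∀ x y, r (x, y) = (σ x y, τ y x))
    (X : Set B) (c : B) (hc : ∀ x, S.mul c x = S.mul x c)
    (k : B → B) (hk : ∀ x, k x = τ c x)
    (hkX : ∀ x ∈ X, k x ∈ X)
    (K : B × B → B × B) (hK : ∀ x y, K (x, y) = (k x, y)) :
    (∀ x y, k (τ y x) = τ y (k x)) ∧
    (∀ p, r (K (r (K p))) = K (r (K (r p)))) :=
  stmt19_general B S σ τ hσ hτ r hr c hc k hk K hK
end
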